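/- arXiv:math/0609145 — 4 statements merged into one kernel-verified Lean document; each statement's English description precedes it below -/
import Mathlib

section
/- Let h : ℝ → ℝ be r times continuously differentiable on an interval I, with |h^(r)(t)| ≥ κ > 0 for all t ∈ I. Then for every ħ > 0, the sublevel set I^ħ = {t ∈ I : |h(t)| < ħ} has Lebesgue measure at most 2^(r-1) · (2·r!/κ)^(1/r) · ħ^(1/r). -/
/-
If the sublevel set `E` had measure larger than `r g`, then, since `x ↦ |E ∩ (-∞, x]|` is
monotone and 1-Lipschitz, `E` would contain points `t₀ < ⋯ < t_r` with `|tᵢ - tⱼ| ≥ |i - j| g`.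
By the mean value theorem for divided differences (Lagrange interpolation plus iterated Rolle),
some `ξ ∈ I` has `h^(r)(ξ) = r! ∑ᵢ h(tᵢ) / ∏_{j ≠ i} (tᵢ - tⱼ)`, and the separation bounds the
right-hand side by `ħ ∑ᵢ r! / (i! (r - i)! g^r) = 2^r ħ / g^r`. Hence `κ g^r ≤ 2^r ħ`; the stated
constant then follows from `r^r ≤ 2^((r-1)^2) r!`.
-/

open MeasureTheory Set
open scoped Nat Polynomial

theorem Polynomial.contDiff_eval {𝕜 : Type*} [NontriviallyNormedField 𝕜] (p : 𝕜[X])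
    (n : WithTop ℕ∞) : ContDiff 𝕜 n fun x => p.eval x :=
  p.contDiff_aeval n

theorem Polynomial.iteratedDeriv_eval {𝕜 : Type*} [NontriviallyNormedField 𝕜] (p : 𝕜[X])
    (n : ℕ) :
    iteratedDeriv n (fun x => p.eval x) = fun x => (Polynomial.derivative^[n] p).eval x := by
  induction n generalizing p with
  | zero => rfl
  | succ n ih =>
    rw [iteratedDeriv_succ', Function.iterate_succ_apply, ← ih]
    congr 1
    funext x
    exact p.deriv

theorem Polynomial.iteratedDerivWithin_eval {𝕜 : Type*} [NontriviallyNormedField 𝕜]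
    (p : 𝕜[X]) (n : ℕ) {s : Set 𝕜} (hs : UniqueDiffOn 𝕜 s) {x : 𝕜} (hx : x ∈ s) :
    iteratedDerivWithin n (fun x => p.eval x) s x = (Polynomial.derivative^[n] p).eval x := by
  rw [iteratedDerivWithin_eq_iteratedDeriv hs (p.contDiff_eval n).contDiffAt hx,
    p.iteratedDeriv_eval]

theorem Set.OrdConnected.uniqueDiffOn {I : Set ℝ} (hI : I.OrdConnected) {a b : ℝ} (ha : a ∈ I)
    (hb : b ∈ I) (hab : a < b) : UniqueDiffOn ℝ I :=
  uniqueDiffOn_convex hI.convex <| (nonempty_Ioo.2 hab).mono <|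
    interior_maximal (Ioo_subset_Icc_self.trans (hI.out ha hb)) isOpen_Ioo

theorem Set.OrdConnected.exists_iteratedDerivWithin_eq_zero {I : Set ℝ} (hI : I.OrdConnected)
    (hU : UniqueDiffOn ℝ I) {k : ℕ} {f : ℝ → ℝ} (hf : ContDiffOn ℝ k f I)
    {t : Fin (k + 1) → ℝ} (ht : StrictMono t) (htI : ∀ i, t i ∈ I) (hft : ∀ i, f (t i) = 0) :
    ∃ ξ ∈ I, iteratedDerivWithin k f I ξ = 0 := by
  induction k generalizing f with
  | zero => exact ⟨t 0, htI 0, by simpa using hft 0⟩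
  | succ k ih =>
    have hIcc (i : Fin (k + 1)) : Icc (t i.castSucc) (t i.succ) ⊆ I := hI.out (htI _) (htI _)
    have hRolle (i : Fin (k + 1)) : ∃ c ∈ Ioo (t i.castSucc) (t i.succ), deriv f c = 0 :=
      exists_deriv_eq_zero (ht i.castSucc_lt_succ) (hf.continuousOn.mono (hIcc i))
        (by rw [hft, hft])
    choose c hc hfc using hRolle
    have hc_mono : StrictMono c := Fin.strictMono_iff_lt_succ.2 fun i =>
      calc c i.castSucc < t i.castSucc.succ := (hc _).2
        _ = t i.succ.castSucc := by rw [Fin.succ_castSucc]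
        _ < c i.succ := (hc _).1
    have hI_nhds (i : Fin (k + 1)) : I ∈ nhds (c i) :=
      Filter.mem_of_superset (isOpen_Ioo.mem_nhds (hc i)) (Ioo_subset_Icc_self.trans (hIcc i))
    obtain ⟨ξ, hξ, hξ0⟩ := ih (hf.derivWithin hU (by norm_cast)) hc_mono
      (fun i => mem_of_mem_nhds (hI_nhds i))
      (fun i => (derivWithin_of_mem_nhds (hI_nhds i)).trans (hfc i))
    exact ⟨ξ, hξ, by rwa [iteratedDerivWithin_succ']⟩

theorem Set.OrdConnected.exists_iteratedDerivWithin_eq_factorial_mul_sum {I : Set ℝ}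
    (hI : I.OrdConnected) (hU : UniqueDiffOn ℝ I) {n : ℕ} {f : ℝ → ℝ} (hf : ContDiffOn ℝ n f I)
    {t : Fin (n + 1) → ℝ} (ht : StrictMono t) (htI : ∀ i, t i ∈ I) :
    ∃ ξ ∈ I, iteratedDerivWithin n f I ξ =
      n ! * ∑ i, f (t i) / ∏ j ∈ Finset.univ.erase i, (t i - t j) := by
  have hinj : InjOn t (Finset.univ : Finset (Fin (n + 1))) := ht.injective.injOn
  obtain ⟨P, hPdeg, hPt⟩ : ∃ P : ℝ[X], P.degree < (Finset.univ : Finset (Fin (n + 1))).card ∧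
      ∀ i, P.eval (t i) = f (t i) :=
    ⟨_, Lagrange.degree_interpolate_lt _ hinj,
      fun i => Lagrange.eval_interpolate_at_node _ hinj (Finset.mem_univ i)⟩
  have hP : ContDiffOn ℝ n (fun x => P.eval x) I := (P.contDiff_eval n).contDiffOn
  obtain ⟨ξ, hξ, hξ0⟩ := hI.exists_iteratedDerivWithin_eq_zero (f := f - fun x => P.eval x) hU
    (hf.sub hP) ht htI fun i => sub_eq_zero.2 (hPt i).symm
  refine ⟨ξ, hξ, ?_⟩
  rw [iteratedDerivWithin_sub hξ hU (hf ξ hξ) (hP ξ hξ), sub_eq_zero] at hξ0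
  rw [hξ0, P.iteratedDerivWithin_eval n hU hξ,
    Lagrange.eval_iterate_derivative_eq_sum hinj hPdeg (by simp)]
  simp [hPt]

theorem prod_erase_abs_sub_natCast (n : ℕ) (i : Fin (n + 1)) :
    ∏ j ∈ Finset.univ.erase i, |(i : ℝ) - j| = (i : ℕ)! * (n - i : ℕ)! := by
  set G : ℕ → ℝ := fun k => if k = i then 1 else |(i : ℝ) - k|
  have hlow : ∏ k ∈ Finset.range i, G k = (i : ℕ)! := by
    rw [← Finset.prod_range_reflect, ← Finset.prod_range_add_one_eq_factorial, Nat.cast_prod]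
    refine Finset.prod_congr rfl fun k hk => ?_
    have hk : k < i := Finset.mem_range.1 hk
    simp only [G, if_neg (by omega : (i : ℕ) - 1 - k ≠ i)]
    rw [abs_of_nonneg (by simp; omega)]
    push_cast [Nat.cast_sub (by omega : k ≤ (i : ℕ) - 1), Nat.cast_sub (by omega : 1 ≤ (i : ℕ))]
    ring
  have hhigh : ∏ k ∈ Finset.range (n - i + 1), G (i + k) = (n - i : ℕ)! := by
    rw [Finset.prod_range_succ', ← Finset.prod_range_add_one_eq_factorial, Nat.cast_prod]
    simp only [G, add_zero, if_pos, mul_one]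
    refine Finset.prod_congr rfl fun k _ => ?_
    rw [if_neg (by omega)]
    push_cast
    rw [show (i : ℝ) - (i + (k + 1)) = -(k + 1) by ring, abs_neg, abs_of_nonneg (by positivity)]
  calc ∏ j ∈ Finset.univ.erase i, |(i : ℝ) - j| = ∏ j ∈ Finset.univ.erase i, G j :=
        Finset.prod_congr rfl fun j hj => by
          simp [G, Fin.val_ne_iff.2 (Finset.ne_of_mem_erase hj)]
    _ = ∏ j : Fin (n + 1), G j := Finset.prod_erase _ (by simp [G])
    _ = ∏ k ∈ Finset.range (i + (n - i + 1)), G k := by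
      rw [Fin.prod_univ_eq_prod_range G (n + 1)]
      congr 2
      omega
    _ = (i : ℕ)! * (n - i : ℕ)! := by rw [Finset.prod_range_add, hlow, hhigh]

theorem sum_inv_factorial_mul_factorial (n : ℕ) :
    ∑ i : Fin (n + 1), (((i : ℕ)! * (n - i : ℕ)! : ℝ))⁻¹ = 2 ^ n / n ! := by
  calc ∑ i : Fin (n + 1), (((i : ℕ)! * (n - i : ℕ)! : ℝ))⁻¹
      = ∑ i ∈ Finset.range (n + 1), (n.choose i : ℝ) / n ! := by
        rw [Fin.sum_univ_eq_sum_range (fun i => ((i ! * (n - i)! : ℝ))⁻¹)]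
        refine Finset.sum_congr rfl fun i hi => ?_
        rw [Nat.cast_choose ℝ (Nat.lt_succ_iff.1 (Finset.mem_range.1 hi))]
        field_simp
    _ = 2 ^ n / n ! := by
      rw [← Finset.sum_div, ← Nat.cast_sum, Nat.sum_range_choose]
      push_cast
      rfl

theorem abs_sum_div_prod_sub_le {n : ℕ} {t y : Fin (n + 1) → ℝ} {M g : ℝ} (hg : 0 < g)
    (hy : ∀ i, |y i| ≤ M) (ht : ∀ i j : Fin (n + 1), |(i : ℝ) - j| * g ≤ |t i - t j|) :
    |∑ i, y i / ∏ j ∈ Finset.univ.erase i, (t i - t j)| ≤ 2 ^ n * M / (n ! * g ^ n) := by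
  have hprod (i : Fin (n + 1)) :
      g ^ n * ((i : ℕ)! * (n - i : ℕ)!) ≤ ∏ j ∈ Finset.univ.erase i, |t i - t j| := by
    calc g ^ n * ((i : ℕ)! * (n - i : ℕ)!) = ∏ j ∈ Finset.univ.erase i, |(i : ℝ) - j| * g := by
          rw [Finset.prod_mul_distrib, prod_erase_abs_sub_natCast, Finset.prod_const,
            Finset.card_erase_of_mem (Finset.mem_univ i), Finset.card_univ, Fintype.card_fin,
            Nat.add_sub_cancel, mul_comm]
      _ ≤ ∏ j ∈ Finset.univ.erase i, |t i - t j| :=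
          Finset.prod_le_prod (fun _ _ => by positivity) fun j _ => ht i j
  calc |∑ i, y i / ∏ j ∈ Finset.univ.erase i, (t i - t j)|
      ≤ ∑ i, |y i| / ∏ j ∈ Finset.univ.erase i, |t i - t j| := by
        refine (Finset.abs_sum_le_sum_abs _ _).trans_eq ?_
        simp only [abs_div, Finset.abs_prod]
    _ ≤ ∑ i : Fin (n + 1), M / (g ^ n * ((i : ℕ)! * (n - i : ℕ)!)) := by
        gcongr with i
        · exact (abs_nonneg _).trans (hy 0)
        · exact hy i
        · exact hprod i
    _ = M / g ^ n * ∑ i : Fin (n + 1), (((i : ℕ)! * (n - i : ℕ)! : ℝ))⁻¹ := by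
        rw [Finset.mul_sum]
        simp only [div_eq_mul_inv, mul_inv, mul_assoc]
    _ = 2 ^ n * M / (n ! * g ^ n) := by
        rw [sum_inv_factorial_mul_factorial]
        field_simp

noncomputable def volumeInterIic (E : Set ℝ) (x : ℝ) : ℝ := (volume (E ∩ Iic x)).toReal

section volumeInterIic

variable {E : Set ℝ}

theorem monotone_volumeInterIic (hE : volume E ≠ ⊤) : Monotone (volumeInterIic E) :=
  fun _ _ hxy => ENNReal.toReal_mono (measure_ne_top_of_subset inter_subset_left hE)
    (measure_mono (inter_subset_inter_right _ (Iic_subset_Iic.2 hxy)))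

theorem volumeInterIic_le_add (hE : volume E ≠ ⊤) (x y : ℝ) :
    volumeInterIic E y ≤ volumeInterIic E x + (volume (E ∩ Ioc x y)).toReal := by
  have hsplit : E ∩ Iic y ⊆ (E ∩ Iic x) ∪ (E ∩ Ioc x y) := fun z ⟨hzE, hzy⟩ =>
    (le_or_gt z x).imp (fun hzx => ⟨hzE, hzx⟩) fun hxz => ⟨hzE, hxz, hzy⟩
  exact ENNReal.toReal_le_add ((measure_mono hsplit).trans (measure_union_le _ _))
    (measure_ne_top_of_subset inter_subset_left hE) (measure_ne_top_of_subset inter_subset_left hE)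

theorem volumeInterIic_sub_le (hE : volume E ≠ ⊤) {x y : ℝ} (hxy : x ≤ y) :
    volumeInterIic E y - volumeInterIic E x ≤ y - x := by
  have hIoc : (volume (E ∩ Ioc x y)).toReal ≤ y - x := by
    calc (volume (E ∩ Ioc x y)).toReal ≤ (volume (Ioc x y)).toReal :=
          ENNReal.toReal_mono (by simp) (measure_mono inter_subset_right)
      _ = y - x := by simp [hxy]
  linarith [volumeInterIic_le_add hE x y]

theorem continuous_volumeInterIic (hE : volume E ≠ ⊤) : Continuous (volumeInterIic E) := by
  refine (LipschitzWith.of_le_add_mul 1 fun x y => ?_).continuous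
  rw [NNReal.coe_one, one_mul, Real.dist_eq]
  rcases le_total x y with hxy | hyx
  · linarith [monotone_volumeInterIic hE hxy, abs_nonneg (x - y)]
  · linarith [volumeInterIic_sub_le hE hyx, le_abs_self (x - y)]

theorem exists_mem_volumeInterIic_mem_Icc (hE : volume E ≠ ⊤) {a b : ℝ} (ha : E ⊆ Ioi a)
    (hb : E ⊆ Iic b) {c d : ℝ} (hc : 0 ≤ c) (hcd : c < d) (hd : d ≤ (volume E).toReal) :
    ∃ τ ∈ E, volumeInterIic E τ ∈ Icc c d := by
  have hFa : volumeInterIic E a = 0 := by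
    have hempty : E ∩ Iic a = ∅ :=
      eq_empty_of_forall_notMem fun z hz => (ha hz.1).not_ge (mem_Iic.1 hz.2)
    rw [volumeInterIic, hempty, measure_empty, ENNReal.toReal_zero]
  have hFb : volumeInterIic E b = (volume E).toReal := by
    rw [volumeInterIic, inter_eq_left.2 hb]
  have hlevel : Icc 0 (volume E).toReal ⊆ range (volumeInterIic E) :=
    hFa ▸ hFb ▸ intermediate_value_univ a b (continuous_volumeInterIic hE)
  obtain ⟨x, hx⟩ := hlevel ⟨hc, hcd.le.trans hd⟩
  obtain ⟨y, hy⟩ := hlevel ⟨hc.trans hcd.le, hd⟩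
  have hpos : 0 < (volume (E ∩ Ioc x y)).toReal := by
    linarith [volumeInterIic_le_add hE x y]
  obtain ⟨τ, hτE, hxτ, hτy⟩ := nonempty_of_measure_ne_zero (ENNReal.toReal_pos_iff.1 hpos).1.ne'
  exact ⟨τ, hτE, hx ▸ monotone_volumeInterIic hE hxτ.le, hy ▸ monotone_volumeInterIic hE hτy⟩

end volumeInterIic

theorem exists_lt_measure_inter_Ioc {μ : Measure ℝ} {E : Set ℝ} {m : ENNReal} (hm : m < μ E) :
    ∃ N : ℕ, m < μ (E ∩ Ioc (-N : ℝ) N) := by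
  have hmono : Monotone fun N : ℕ => E ∩ Ioc (-N : ℝ) N := fun M N hMN =>
    inter_subset_inter_right _ (Ioc_subset_Ioc (by simpa using hMN) (by simpa using hMN))
  have hunion : ⋃ N : ℕ, E ∩ Ioc (-N : ℝ) N = E := by
    refine subset_antisymm (iUnion_subset fun _ => inter_subset_left) fun x hx => ?_
    obtain ⟨N, hN⟩ := exists_nat_gt |x|
    exact mem_iUnion.2 ⟨N, hx, (abs_lt.1 hN).1, (abs_lt.1 hN).2.le⟩
  have := tendsto_measure_iUnion_atTop (μ := μ) hmono
  rw [hunion] at this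
  exact (this.eventually (lt_mem_nhds hm)).exists

theorem exists_separated_points_of_lt_volume {E : Set ℝ} {n : ℕ} {g : ℝ} (hg : 0 < g)
    (hE : ENNReal.ofReal (n * g) < volume E) :
    ∃ t : Fin (n + 1) → ℝ, (∀ i, t i ∈ E) ∧ StrictMono t ∧
      ∀ i j : Fin (n + 1), |(i : ℝ) - j| * g ≤ |t i - t j| := by
  obtain ⟨N, hN⟩ := exists_lt_measure_inter_Ioc hE
  set S := E ∩ Ioc (-N : ℝ) N
  have hS : volume S ≠ ⊤ := measure_ne_top_of_subset inter_subset_right (by simp)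
  set V := (volume S).toReal
  have hgV : n * g < V := (ENNReal.ofReal_lt_iff_lt_toReal (by positivity) hS).1 hN
  -- Points at which `volumeInterIic S` lies in `[i (g + δ), i (g + δ) + δ]` are `g`-separated,
  -- because `volumeInterIic S` is monotone and 1-Lipschitz.
  set δ := (V - n * g) / (n + 2)
  have hδ : 0 < δ := div_pos (by linarith) (by positivity)
  have hδV : n * (g + δ) + δ ≤ V := by
    have : (n + 2) * δ = V - n * g := mul_div_cancel₀ _ (by positivity)
    nlinarith
  have hlevel (i : Fin (n + 1)) :
      ∃ τ ∈ S, volumeInterIic S τ ∈ Icc (i * (g + δ)) (i * (g + δ) + δ) := by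
    have hi : (i : ℝ) ≤ n := by exact_mod_cast Nat.lt_succ_iff.1 i.isLt
    exact exists_mem_volumeInterIic_mem_Icc hS (fun x hx => hx.2.1) (fun x hx => hx.2.2)
      (by positivity) (by linarith) (by nlinarith)
  choose τ hτS hτF using hlevel
  have hgap (i j : Fin (n + 1)) (hij : i < j) : τ i < τ j ∧ (j - i : ℝ) * g ≤ τ j - τ i := by
    have hij' : (i : ℝ) + 1 ≤ j := by exact_mod_cast Fin.lt_def.1 hij
    have hF : (j - i : ℝ) * g ≤ volumeInterIic S (τ j) - volumeInterIic S (τ i) := by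
      nlinarith [(hτF i).2, (hτF j).1]
    have hlt : τ i < τ j := lt_of_not_ge fun hji => by
      nlinarith [monotone_volumeInterIic hS hji]
    exact ⟨hlt, hF.trans (volumeInterIic_sub_le hS hlt.le)⟩
  refine ⟨τ, fun i => (hτS i).1, fun i j hij => (hgap i j hij).1, fun i j => ?_⟩
  rcases lt_trichotomy i j with hij | rfl | hij
  · obtain ⟨hlt, hle⟩ := hgap i j hij
    have hij' : (i : ℝ) < j := by exact_mod_cast Fin.lt_def.1 hij
    rw [abs_sub_comm, abs_of_pos (sub_pos.2 hij'), abs_sub_comm, abs_of_pos (sub_pos.2 hlt)]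
    exact hle
  · simp
  · obtain ⟨hlt, hle⟩ := hgap j i hij
    have hij' : (j : ℝ) < i := by exact_mod_cast Fin.lt_def.1 hij
    rw [abs_of_pos (sub_pos.2 hij'), abs_of_pos (sub_pos.2 hlt)]
    exact hle

theorem Nat.add_one_pow_add_one_le_two_pow_sq_mul_factorial (n : ℕ) :
    (n + 1) ^ (n + 1) ≤ 2 ^ (n ^ 2) * (n + 1)! := by
  induction n with
  | zero => simp
  | succ n ih =>
    calc (n + 2) ^ (n + 2) = (n + 2) * (n + 2) ^ (n + 1) := by ring
      _ ≤ (n + 2) * (2 ^ (n + 1) * (n + 1) ^ (n + 1)) := by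
          rw [← mul_pow]
          gcongr
          omega
      _ ≤ (n + 2) * (2 ^ (n + 1) * (2 ^ (n ^ 2) * (n + 1)!)) := by gcongr
      _ = 2 ^ (n ^ 2 + n + 1) * (n + 2)! := by rw [Nat.factorial_succ (n + 1)]; ring
      _ ≤ 2 ^ ((n + 1) ^ 2) * (n + 2)! := by gcongr <;> nlinarith

theorem natCast_mul_le_of_mul_pow_le {r : ℕ} (hr : 1 ≤ r) {κ g ħ : ℝ} (hκ : 0 < κ) (hg : 0 ≤ g)
    (hħ : 0 ≤ ħ) (h : κ * g ^ r ≤ 2 ^ r * ħ) :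
    r * g ≤ 2 ^ (r - 1) * (2 * r ! / κ) ^ ((1 : ℝ) / r) * ħ ^ ((1 : ℝ) / r) := by
  obtain ⟨n, rfl⟩ := Nat.exists_eq_add_of_le' hr
  rw [← pow_le_pow_iff_left₀ (by positivity) (by positivity) n.succ_ne_zero, mul_pow, mul_pow,
    mul_pow, one_div, Real.rpow_inv_natCast_pow (by positivity) n.succ_ne_zero,
    Real.rpow_inv_natCast_pow hħ n.succ_ne_zero, Nat.add_sub_cancel]
  have hfact : ((n + 1 : ℕ) : ℝ) ^ (n + 1) ≤ 2 ^ (n ^ 2) * (n + 1)! := by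
    exact_mod_cast n.add_one_pow_add_one_le_two_pow_sq_mul_factorial
  have hg' : g ^ (n + 1) ≤ 2 ^ (n + 1) * ħ / κ := by rw [le_div_iff₀ hκ]; linarith
  calc ((n + 1 : ℕ) : ℝ) ^ (n + 1) * g ^ (n + 1)
      ≤ 2 ^ (n ^ 2) * (n + 1)! * (2 ^ (n + 1) * ħ / κ) := by gcongr
    _ = (2 ^ n) ^ (n + 1) * (2 * (n + 1)! / κ) * ħ := by ring

theorem mul_pow_le_of_separated_points {I : Set ℝ} (hI : I.OrdConnected) (hU : UniqueDiffOn ℝ I)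
    {r : ℕ} {h : ℝ → ℝ} {κ ħ g : ℝ} (hsm : ContDiffOn ℝ r h I)
    (hder : ∀ x ∈ I, κ ≤ |iteratedDerivWithin r h I x|) {t : Fin (r + 1) → ℝ} (ht : StrictMono t)
    (htI : ∀ i, t i ∈ I) (hth : ∀ i, |h (t i)| ≤ ħ) (hg : 0 < g)
    (hsep : ∀ i j : Fin (r + 1), |(i : ℝ) - j| * g ≤ |t i - t j|) :
    κ * g ^ r ≤ 2 ^ r * ħ := by
  obtain ⟨ξ, hξ, hξeq⟩ := hI.exists_iteratedDerivWithin_eq_factorial_mul_sum hU hsm ht htI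
  have hκ : κ ≤ 2 ^ r * ħ / g ^ r :=
    calc κ ≤ |iteratedDerivWithin r h I ξ| := hder ξ hξ
      _ = r ! * |∑ i, h (t i) / ∏ j ∈ Finset.univ.erase i, (t i - t j)| := by
          rw [hξeq, abs_mul, Nat.abs_cast]
      _ ≤ r ! * (2 ^ r * ħ / (r ! * g ^ r)) := by
          gcongr
          exact abs_sum_div_prod_sub_le hg hth hsep
      _ = 2 ^ r * ħ / g ^ r := by field_simp
  rwa [le_div_iff₀ (by positivity)] at hκ

theorem sublevel_set_estimate
    (r : ℕ) (hr : 1 ≤ r) (I : Set ℝ) (hI : I.OrdConnected)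
    (h : ℝ → ℝ) (κ : ℝ) (hκ : 0 < κ)
    (hsm : ContDiffOn ℝ r h I)
    (hder : ∀ t ∈ I, κ ≤ |iteratedDerivWithin r h I t|)
    (hbar : ℝ) (hhb : 0 < hbar) :
    volume {t | t ∈ I ∧ |h t| < hbar}
      ≤ ENNReal.ofReal
          (2 ^ (r - 1) * (2 * (r.factorial : ℝ) / κ) ^ ((1 : ℝ) / r)
            * hbar ^ ((1 : ℝ) / r)) := by
  by_contra! hlt
  obtain ⟨m, -, hBm, hmE⟩ := ENNReal.lt_iff_exists_real_btwn.1 hlt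
  obtain ⟨hBm, hm⟩ := ENNReal.ofReal_lt_ofReal_iff'.1 hBm
  have hr0 : (0 : ℝ) < r := by exact_mod_cast hr
  have hg : 0 < m / r := div_pos hm hr0
  obtain ⟨t, htE, ht, hsep⟩ := exists_separated_points_of_lt_volume (n := r) hg
    (by rwa [mul_div_cancel₀ _ hr0.ne'])
  have : NeZero r := ⟨by omega⟩
  have hU : UniqueDiffOn ℝ I := hI.uniqueDiffOn (htE 0).1 (htE (Fin.last r)).1 (ht Fin.last_pos')
  have hκg := mul_pow_le_of_separated_points hI hU hsm hder ht (fun i => (htE i).1)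
    (fun i => (htE i).2.le) hg hsep
  have hmB := natCast_mul_le_of_mul_pow_le hr hκ hg.le hhb.le hκg
  rw [mul_div_cancel₀ _ hr0.ne'] at hmB
  linarith
end

section
/- Let h : ℝ → ℝ be r times continuously differentiable on an interval I with |h^(r)(t)| ≥ κ > 0 on I, and let σ = (σ₁,…,σ_{r-1}) be a tuple of signs σⱼ ∈ {−1,+1}. Then the set I_σ = {t ∈ I : σⱼ·h^(j)(t) ≥ 0 for all j = 1,…,r−1} is an interval (i.e., a convex subset of ℝ). -/
/-!
Downward induction on `k`. Suppose the set where `σ_j h^(j) ≥ 0` for all `k < j < r` is an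
interval `J` on which `h^(k+1)` has a constant sign. Then `h^(k)` is monotone or antitone on `J`,
so the extra condition `σ_k h^(k) ≥ 0` cuts out a subinterval, on which `h^(k)` has the constant
sign of `σ_k`. The induction starts at `k = r`: `h^(r)` is continuous and never vanishes on the
interval `I`, so it has a constant sign there by the intermediate value theorem.
-/

open Set

def HasConstSignOn {α : Type*} (g : α → ℝ) (s : Set α) : Prop :=
  (∀ t ∈ s, 0 ≤ g t) ∨ ∀ t ∈ s, g t ≤ 0

namespace HasConstSignOn

variable {α : Type*} {g : α → ℝ} {s : Set α}

theorem of_nonneg_mul {c : ℝ} (hc : c ≠ 0) (h : ∀ t ∈ s, 0 ≤ c * g t) : HasConstSignOn g s := by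
  rcases hc.lt_or_gt with hc | hc
  · exact Or.inr fun t ht => nonpos_of_mul_nonneg_right (h t ht) hc
  · exact Or.inl fun t ht => nonneg_of_mul_nonneg_right (h t ht) hc

theorem const_mul (h : HasConstSignOn g s) (c : ℝ) : HasConstSignOn (fun t => c * g t) s := by
  rcases le_total 0 c with hc | hc <;> rcases h with h | h
  · exact Or.inl fun t ht => mul_nonneg hc (h t ht)
  · exact Or.inr fun t ht => mul_nonpos_of_nonneg_of_nonpos hc (h t ht)
  · exact Or.inr fun t ht => mul_nonpos_of_nonpos_of_nonneg hc (h t ht)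
  · exact Or.inl fun t ht => mul_nonneg_of_nonpos_of_nonpos hc (h t ht)

theorem monotoneOn_or_antitoneOn {D : Set ℝ} (hD : Convex ℝ D) {f f' : ℝ → ℝ}
    (hf : ContinuousOn f D) (hf' : ∀ x ∈ interior D, HasDerivWithinAt f (f' x) (interior D) x)
    (h : HasConstSignOn f' D) : MonotoneOn f D ∨ AntitoneOn f D :=
  h.imp
    (fun h => monotoneOn_of_hasDerivWithinAt_nonneg hD hf hf' fun x hx => h x (interior_subset hx))
    (fun h => antitoneOn_of_hasDerivWithinAt_nonpos hD hf hf' fun x hx => h x (interior_subset hx))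

end HasConstSignOn

theorem IsPreconnected.hasConstSignOn {α : Type*} [TopologicalSpace α] {s : Set α}
    (hs : IsPreconnected s) {g : α → ℝ} (hg : ContinuousOn g s) (h0 : ∀ t ∈ s, g t ≠ 0) :
    HasConstSignOn g s := by
  unfold HasConstSignOn
  by_contra! ⟨⟨a, ha, hga⟩, ⟨b, hb, hgb⟩⟩
  obtain ⟨t, ht, hgt⟩ := hs.intermediate_value ha hb hg ⟨hga.le, hgb.le⟩
  exact h0 t ht hgt

theorem Set.OrdConnected.uniqueDiffOn_s1 {s : Set ℝ} (hs : s.OrdConnected) (hnt : s.Nontrivial) :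
    UniqueDiffOn ℝ s := by
  obtain ⟨a, ha, b, hb, hab⟩ := hnt.exists_lt
  refine uniqueDiffOn_convex hs.convex ⟨(a + b) / 2, interior_mono (hs.out ha hb) ?_⟩
  rw [interior_Icc]
  constructor <;> linarith

theorem hasDerivWithinAt_iteratedDerivWithin {𝕜 F : Type*} [NontriviallyNormedField 𝕜]
    [NormedAddCommGroup F] [NormedSpace 𝕜 F] {f : 𝕜 → F} {s : Set 𝕜} {n : WithTop ℕ∞} {k : ℕ}
    (hf : ContDiffOn 𝕜 n f s) (hk : k < n) (hs : UniqueDiffOn 𝕜 s) {x : 𝕜} (hx : x ∈ s) :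
    HasDerivWithinAt (iteratedDerivWithin k f s) (iteratedDerivWithin (k + 1) f s x) s x := by
  rw [iteratedDerivWithin_succ]
  exact (hf.differentiableOn_iteratedDerivWithin hk hs x hx).hasDerivWithinAt

/-- The paper's `I_σ` is `signSet I (iteratedDerivWithin · h I) σ 1 r`; the bound `j < n` replaces
`j ≤ n - 1`, which would misbehave at `n = 0` under truncated subtraction. -/
def signSet (I : Set ℝ) (f : ℕ → ℝ → ℝ) (σ : ℕ → ℝ) (k n : ℕ) : Set ℝ :=
  {t | t ∈ I ∧ ∀ j, k ≤ j → j < n → 0 ≤ σ j * f j t}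

section signSet

variable {I : Set ℝ} {f : ℕ → ℝ → ℝ} {σ : ℕ → ℝ} {k n : ℕ}

theorem signSet_subset : signSet I f σ k n ⊆ I := fun _ ht => ht.1

theorem signSet_of_le (h : n ≤ k) : signSet I f σ k n = I := by
  ext t
  exact ⟨fun ht => ht.1, fun ht => ⟨ht, fun j hkj hjn => absurd (hkj.trans_lt hjn) h.not_gt⟩⟩

theorem signSet_of_lt (h : k < n) :
    signSet I f σ k n = {t | t ∈ signSet I f σ (k + 1) n ∧ 0 ≤ σ k * f k t} := by
  ext t
  refine ⟨fun ht => ⟨⟨ht.1, fun j hj => ht.2 j (k.le_succ.trans hj)⟩, ht.2 k le_rfl h⟩, ?_⟩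
  rintro ⟨ht, hk⟩
  refine ⟨ht.1, fun j hkj hjn => ?_⟩
  rcases hkj.eq_or_lt with rfl | hkj
  · exact hk
  · exact ht.2 j hkj hjn

theorem convex_signSet_and_hasConstSignOn (hI : Convex ℝ I)
    (hderiv : ∀ k < n, ∀ x ∈ I, HasDerivWithinAt (f k) (f (k + 1) x) I x)
    (hn : HasConstSignOn (f n) I) (hσ : ∀ j < n, σ j ≠ 0) (hk : k ≤ n) :
    Convex ℝ (signSet I f σ k n) ∧ HasConstSignOn (f k) (signSet I f σ k n) := by
  induction hk using Nat.decreasingInduction with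
  | self => rw [signSet_of_le le_rfl]; exact ⟨hI, hn⟩
  | of_succ k hk ih =>
    obtain ⟨hJ, hsign⟩ := ih
    set J := signSet I f σ (k + 1) n
    have hcont : ContinuousOn (fun t => σ k * f k t) J := continuousOn_const.mul fun x hx =>
      (hderiv k hk x (signSet_subset hx)).continuousWithinAt.mono signSet_subset
    have hder : ∀ x ∈ interior J,
        HasDerivWithinAt (fun t => σ k * f k t) (σ k * f (k + 1) x) (interior J) x := fun x hx =>
      ((hderiv k hk x (signSet_subset (interior_subset hx))).mono
        (interior_subset.trans signSet_subset)).const_mul (σ k)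
    rw [signSet_of_lt hk]
    refine ⟨?_, HasConstSignOn.of_nonneg_mul (hσ k hk) fun t ht => ht.2⟩
    rcases (hsign.const_mul (σ k)).monotoneOn_or_antitoneOn hJ hcont hder with hmono | hanti
    · exact hmono.quasiconcaveOn hJ 0
    · exact hanti.quasiconcaveOn hJ 0

theorem convex_signSet (hI : Convex ℝ I)
    (hderiv : ∀ k < n, ∀ x ∈ I, HasDerivWithinAt (f k) (f (k + 1) x) I x)
    (hn : HasConstSignOn (f n) I) (hσ : ∀ j < n, σ j ≠ 0) : Convex ℝ (signSet I f σ k n) := by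
  rcases le_total k n with hk | hk
  · exact (convex_signSet_and_hasConstSignOn hI hderiv hn hσ hk).1
  · rwa [signSet_of_le hk]

end signSet

theorem sign_set_is_interval_general
    (r : ℕ) (I : Set ℝ) (hI : I.OrdConnected)
    (h : ℝ → ℝ) (κ : ℝ) (hκ : 0 < κ)
    (hsm : ContDiffOn ℝ r h I)
    (hder : ∀ t ∈ I, κ ≤ |iteratedDerivWithin r h I t|)
    (σ : ℕ → ℝ) (hσ : ∀ j, σ j = 1 ∨ σ j = -1) :
    Convex ℝ {t | t ∈ I ∧ ∀ j, 1 ≤ j → j ≤ r - 1 →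
      0 ≤ σ j * iteratedDerivWithin j h I t} := by
  rcases I.subsingleton_or_nontrivial with hsub | hnt
  · exact (hsub.anti fun t ht => ht.1).convex
  have hUD := hI.uniqueDiffOn_s1 hnt
  have hsign : HasConstSignOn (iteratedDerivWithin r h I) I :=
    hI.isPreconnected.hasConstSignOn (hsm.continuousOn_iteratedDerivWithin le_rfl hUD)
      fun t ht h0 => by simpa [h0] using hκ.trans_le (hder t ht)
  have hset : {t | t ∈ I ∧ ∀ j, 1 ≤ j → j ≤ r - 1 → 0 ≤ σ j * iteratedDerivWithin j h I t} =
      signSet I (fun j => iteratedDerivWithin j h I) σ 1 r := by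
    ext t
    refine and_congr_right fun _ => forall_congr' fun j => imp_congr_right fun hj => ?_
    exact imp_congr_left (by omega)
  rw [hset]
  exact convex_signSet (f := fun j => iteratedDerivWithin j h I) (k := 1) (n := r) hI.convex
    (fun k hk x hx => hasDerivWithinAt_iteratedDerivWithin hsm (by exact_mod_cast hk) hUD hx)
    hsign fun j _ => by rcases hσ j with hj | hj <;> norm_num [hj]

theorem sign_set_is_interval
    (r : ℕ) (hr : 2 ≤ r) (I : Set ℝ) (hI : I.OrdConnected)
    (h : ℝ → ℝ) (κ : ℝ) (hκ : 0 < κ)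
    (hsm : ContDiffOn ℝ r h I)
    (hder : ∀ t ∈ I, κ ≤ |iteratedDerivWithin r h I t|)
    (σ : ℕ → ℝ) (hσ : ∀ j, σ j = 1 ∨ σ j = -1) :
    Convex ℝ {t | t ∈ I ∧ ∀ j, 1 ≤ j → j ≤ r - 1 →
      0 ≤ σ j * iteratedDerivWithin j h I t} :=
  sign_set_is_interval_general r I hI h κ hκ hsm hder σ hσ
end

section
/- Let h : [0,δ] → ℝ be r times continuously differentiable with h^(r)(t) ≥ κ > 0 on [0,δ], and suppose h^(j)(0) ≥ −ε and h^(j)(δ) ≥ −ε for all j = 1,…,r−1, where ε ≥ 0. If moreover h(0) ≥ ħ/2 and h(δ) ≥ ħ/2 and δ ≤ 1, then there is a constant C depending only on r and κ such that h(t) ≥ ħ/2 − C·ε for all t ∈ [0,δ]. In particular if ε ≤ ħ/(4C) then h ≥ ħ/4 on [0,δ]. -/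
/-!
Integrating the derivatives from the left endpoint down the chain: `h⁽ʳ⁾ ≥ 0`, and if
`h⁽ʲ⁺¹⁾ ≥ -M` on `[0, δ]` with `δ ≤ 1`, then `h⁽ʲ⁾(t) ≥ h⁽ʲ⁾(0) - M ≥ -ε - M`. Hence
`h⁽ʲ⁾ ≥ -(r - j) ε` for `1 ≤ j ≤ r`, and one more integration gives `h ≥ h(0) - (r - 1) ε`,
so `C = r` works.
-/

open Set

theorem mul_sub_le_image_sub_of_le_derivWithin_Icc {f : ℝ → ℝ} {a b C : ℝ}
    (hf : DifferentiableOn ℝ f (Icc a b))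
    (hf' : ∀ x ∈ Icc a b, C ≤ derivWithin f (Icc a b) x) {t : ℝ} (ht : t ∈ Icc a b) :
    C * (t - a) ≤ f t - f a := by
  refine (convex_Icc a b).mul_sub_le_image_sub_of_le_deriv hf.continuousOn
    (hf.mono interior_subset) (fun x hx => ?_) a (left_mem_Icc.2 (ht.1.trans ht.2)) t ht ht.1
  rw [interior_Icc] at hx
  rw [← derivWithin_of_mem_nhds (Icc_mem_nhds hx.1 hx.2)]
  exact hf' x (Ioo_subset_Icc_self hx)

theorem sub_le_of_neg_le_derivWithin_Icc_of_le_one {f : ℝ → ℝ} {δ M : ℝ} (hδ : δ ≤ 1)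
    (hM : 0 ≤ M) (hf : DifferentiableOn ℝ f (Icc 0 δ))
    (hf' : ∀ x ∈ Icc 0 δ, -M ≤ derivWithin f (Icc 0 δ) x) {t : ℝ} (ht : t ∈ Icc 0 δ) :
    f 0 - M ≤ f t := by
  have hgrowth := mul_sub_le_image_sub_of_le_derivWithin_Icc hf hf' ht
  nlinarith [ht.1, ht.2]

theorem neg_mul_le_iteratedDerivWithin_Icc {h : ℝ → ℝ} {r : ℕ} {δ ε : ℝ} (hδ : 0 < δ)
    (hδ1 : δ ≤ 1) (hε : 0 ≤ ε) (hh : ContDiffOn ℝ r h (Icc 0 δ))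
    (htop : ∀ t ∈ Icc 0 δ, 0 ≤ iteratedDerivWithin r h (Icc 0 δ) t)
    (hzero : ∀ j, 1 ≤ j → j < r → -ε ≤ iteratedDerivWithin j h (Icc 0 δ) 0)
    {j : ℕ} (hj : j ≤ r) (hj1 : 1 ≤ j) :
    ∀ t ∈ Icc 0 δ, -(((r : ℝ) - j) * ε) ≤ iteratedDerivWithin j h (Icc 0 δ) t := by
  induction hj using Nat.decreasingInduction with
  | self => simpa using htop
  | of_succ j hjr ih =>
    intro t ht
    have hdiff : DifferentiableOn ℝ (iteratedDerivWithin j h (Icc 0 δ)) (Icc 0 δ) :=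
      hh.differentiableOn_iteratedDerivWithin (by exact_mod_cast hjr) (uniqueDiffOn_Icc hδ)
    have hderiv := ih (by omega)
    simp only [iteratedDerivWithin_succ, Nat.cast_succ] at hderiv
    have hM : 0 ≤ ((r : ℝ) - (j + 1)) * ε :=
      mul_nonneg (sub_nonneg.2 (by exact_mod_cast hjr)) hε
    have hgrowth := sub_le_of_neg_le_derivWithin_Icc_of_le_one hδ1 hM hdiff hderiv ht
    linarith [hzero j hj1 hjr]

theorem almost_monotonicity
    (r : ℕ) (hr : 1 ≤ r) (κ : ℝ) (hκ : 0 < κ) :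
    ∃ C > 0, ∀ (δ ε hbar : ℝ) (h : ℝ → ℝ),
      0 < δ → δ ≤ 1 → 0 ≤ ε → 0 < hbar →
      ContDiffOn ℝ r h (Set.Icc 0 δ) →
      (∀ t ∈ Set.Icc 0 δ, κ ≤ iteratedDerivWithin r h (Set.Icc 0 δ) t) →
      (∀ j, 1 ≤ j → j ≤ r - 1 →
        -ε ≤ iteratedDerivWithin j h (Set.Icc 0 δ) 0 ∧
        -ε ≤ iteratedDerivWithin j h (Set.Icc 0 δ) δ) →
      hbar / 2 ≤ h 0 → hbar / 2 ≤ h δ →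
      (∀ t ∈ Set.Icc 0 δ, hbar / 2 - C * ε ≤ h t) ∧
      (ε ≤ hbar / (4 * C) → ∀ t ∈ Set.Icc 0 δ, hbar / 4 ≤ h t) := by
  refine ⟨r, by exact_mod_cast hr, fun δ ε hbar h hδ hδ1 hε _ hh htop hbd h0 _ => ?_⟩
  have hderiv : ∀ t ∈ Icc 0 δ, -(((r : ℝ) - 1) * ε) ≤ derivWithin h (Icc 0 δ) t := by
    simpa using neg_mul_le_iteratedDerivWithin_Icc hδ hδ1 hε hh
      (fun t ht => hκ.le.trans (htop t ht)) (fun j hj1 hjr => (hbd j hj1 (by omega)).1) hr le_rfl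
  have hM : 0 ≤ ((r : ℝ) - 1) * ε := mul_nonneg (sub_nonneg.2 (by exact_mod_cast hr)) hε
  have hlower : ∀ t ∈ Icc 0 δ, hbar / 2 - r * ε ≤ h t := fun t ht => by
    have hgrowth := sub_le_of_neg_le_derivWithin_Icc_of_le_one hδ1 hM
      (hh.differentiableOn (by exact_mod_cast Nat.one_le_iff_ne_zero.1 hr)) hderiv ht
    linarith
  refine ⟨hlower, fun hsmall t ht => ?_⟩
  have hCε : r * ε ≤ hbar / 4 := by
    rw [div_mul_eq_div_div, le_div_iff₀ (by exact_mod_cast hr)] at hsmall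
    linarith
  linarith [hlower t ht]
end

section
/- (Cotlar–Stein lemma, finite version) Let E, F be Hilbert spaces and T₁,…,T_N : E → F bounded operators. Suppose there exist nonnegative functions a, b on {1,…,N}² with ‖Tᵢ* Tⱼ‖ ≤ a(i,j) and ‖Tᵢ Tⱼ*‖ ≤ b(i,j) for all i,j, and set A = max_i Σⱼ a(i,j)^(1/2), B = max_i Σⱼ b(i,j)^(1/2). Then ‖Σᵢ Tᵢ‖ ≤ A^(1/2)·B^(1/2). -/
/-!
Put `S = ∑ i, T i` and `P = S† S`, so that `‖S‖ ^ 2 = ‖P‖` and, `P` being self-adjoint,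
`‖P‖ ^ 2 ^ k = ‖P ^ 2 ^ k‖`. Expanding `P ^ (n + 1)` gives a sum of words
`T i₀† T j₀ T i₁† T j₁ ⋯ T iₙ† T jₙ`. A word is bounded once by grouping it as
`∏ₖ (T iₖ† T jₖ)`, which costs `∏ₖ a iₖ jₖ`, and once as `T i₀† (∏ₖ T jₖ T iₖ₊₁†) T jₙ`, which
costs `‖T i₀‖ ‖T jₙ‖ ∏ₖ b jₖ iₖ₊₁`. The geometric mean of the two bounds is, up to a constant,
the weight of the path `i₀ → j₀ → i₁ → ⋯ → jₙ` with alternating weights `√a` and `√b`, and the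
row-sum bounds give `‖P ^ (n + 1)‖ ≤ C (B A) ^ n`. Letting `n → ∞` yields `‖P‖ ≤ A B`.
-/

open Filter Topology

theorem le_mul_of_le_sq_of_le_sq {x p q : ℝ} (hp : 0 ≤ p) (hq : 0 ≤ q) (hxp : x ≤ p ^ 2)
    (hxq : x ≤ q ^ 2) : x ≤ p * q := by
  rcases le_or_gt x 0 with hx | hx
  · exact hx.trans (mul_nonneg hp hq)
  · nlinarith [mul_le_mul hxp hxq hx.le (sq_nonneg p), mul_nonneg hp hq]

theorem le_of_frequently_pow_succ_le_mul_pow {x y C : ℝ} (hy : 0 ≤ y)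
    (h : ∃ᶠ n in atTop, x ^ (n + 1) ≤ C * y ^ n) : x ≤ y := by
  by_contra! hyx
  have hx : 0 < x := hy.trans_lt hyx
  have hC : Tendsto (fun n : ℕ => C * (y / x) ^ n) atTop (𝓝 0) := by
    simpa using (tendsto_pow_atTop_nhds_zero_of_lt_one (div_nonneg hy hx.le)
      ((div_lt_one hx).2 hyx)).const_mul C
  obtain ⟨n, hn, hlt⟩ := (h.and_eventually (hC.eventually (gt_mem_nhds hx))).exists
  have : x ^ (n + 1) < x ^ (n + 1) := calc
    x ^ (n + 1) ≤ C * y ^ n := hn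
    _ = C * (y / x) ^ n * x ^ n := by rw [div_pow, mul_assoc, div_mul_cancel₀ _ (by positivity)]
    _ < x * x ^ n := by gcongr
    _ = x ^ (n + 1) := by ring
  exact this.false

theorem IsSelfAdjoint.norm_le_of_norm_pow_succ_le {A : Type*} [NormedRing A] [StarRing A]
    [CStarRing A] {a : A} (ha : IsSelfAdjoint a) {C y : ℝ} (hy : 0 ≤ y)
    (h : ∀ n : ℕ, ‖a ^ (n + 1)‖ ≤ C * y ^ n) : ‖a‖ ≤ y := by
  refine le_of_frequently_pow_succ_le_mul_pow (C := C) hy ?_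
  have h2 : Tendsto (fun k : ℕ => 2 ^ k - 1) atTop atTop :=
    (tendsto_sub_atTop_nat 1).comp (tendsto_pow_atTop_atTop_of_one_lt one_lt_two)
  refine h2.frequently (Frequently.of_forall fun k => ?_)
  simpa only [Nat.sub_add_cancel Nat.one_le_two_pow, ha.norm_pow_two_pow] using h (2 ^ k - 1)

theorem sum_mul_prod_le_mul_pow {σ : Type*} [Fintype σ] (μ : σ → ℝ) (K : σ → σ → ℝ) {R : ℝ}
    (hμ : ∀ p, 0 ≤ μ p) (hK : ∀ p q, 0 ≤ K p q) (hR : ∀ p, ∑ q, K p q ≤ R) (hR0 : 0 ≤ R) :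
    ∀ n : ℕ, ∑ x : Fin (n + 1) → σ, μ (x 0) * ∏ k : Fin n, K (x k.castSucc) (x k.succ)
      ≤ (∑ p, μ p) * R ^ n
  | 0 => by simp [← (Equiv.funUnique (Fin 1) σ).sum_comp]
  | n + 1 => by
    set W : (Fin (n + 1) → σ) → ℝ := fun y => μ (y 0) * ∏ k : Fin n, K (y k.castSucc) (y k.succ)
    have hW : ∀ y, 0 ≤ W y := fun y => mul_nonneg (hμ _) (Finset.prod_nonneg fun _ _ => hK _ _)
    rw [← (Fin.snocEquiv fun _ => σ).sum_comp, Fintype.sum_prod_type_right]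
    calc _ = ∑ y, W y * ∑ q, K (y (Fin.last n)) q := by
          refine Finset.sum_congr rfl fun y _ => ?_
          simp [W, Fin.prod_univ_castSucc, Finset.mul_sum, mul_assoc, Fin.succ_castSucc,
            -Fin.castSucc_succ]
      _ ≤ ∑ y, W y * R := by gcongr with y; exacts [hW y, hR _]
      _ ≤ (∑ p, μ p) * R ^ n * R := by
          rw [← Finset.sum_mul]; gcongr; exact sum_mul_prod_le_mul_pow μ K hμ hK hR hR0 n
      _ = (∑ p, μ p) * R ^ (n + 1) := by ring

theorem sum_pow_eq_sum_prod_ofFn {A κ : Type*} [Semiring A] [Fintype κ] (x : κ → A) (n : ℕ) :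
    (∑ p, x p) ^ n = ∑ w : Fin n → κ, (List.ofFn fun k => x (w k)).prod := by
  simpa using (MultilinearMap.mkPiAlgebraFin ℕ n A).map_sum fun _ p => x p

namespace ContinuousLinearMap

section Normed

variable {𝕜 E F : Type*} [NontriviallyNormedField 𝕜] [NormedAddCommGroup E] [NormedSpace 𝕜 E]
  [NormedAddCommGroup F] [NormedSpace 𝕜 F]

theorem norm_prod_ofFn_le {n : ℕ} (f : Fin n → E →L[𝕜] E) :
    ‖(List.ofFn f).prod‖ ≤ ∏ k, ‖f k‖ := by
  calc ‖(List.ofFn f).prod‖ ≤ ((List.ofFn f).map norm).prod := by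
        rcases eq_or_ne (List.ofFn f) [] with h | h
        · simpa [h, one_def] using norm_id_le
        · exact List.norm_prod_le' h
    _ = ∏ k, ‖f k‖ := by rw [List.map_ofFn, List.prod_ofFn]; rfl

theorem prod_ofFn_comp_eq_comp_prod_ofFn_comp {n : ℕ} (u : Fin (n + 1) → F →L[𝕜] E)
    (v : Fin (n + 1) → E →L[𝕜] F) :
    (List.ofFn fun k => u k ∘L v k).prod =
      u 0 ∘L (List.ofFn fun k : Fin n => v k.castSucc ∘L u k.succ).prod ∘L v (Fin.last n) := by
  induction n with
  | zero => simp [one_def, mul_def]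
  | succ n ih =>
    rw [List.ofFn_succ, List.prod_cons, ih (fun k => u k.succ) (fun k => v k.succ),
      List.ofFn_succ, List.prod_cons]
    simp [mul_def, comp_assoc]

theorem norm_prod_ofFn_comp_le {n : ℕ} (u : Fin (n + 1) → F →L[𝕜] E)
    (v : Fin (n + 1) → E →L[𝕜] F) :
    ‖(List.ofFn fun k => u k ∘L v k).prod‖ ≤
      ‖u 0‖ * (∏ k : Fin n, ‖v k.castSucc ∘L u k.succ‖) * ‖v (Fin.last n)‖ := by
  rw [prod_ofFn_comp_eq_comp_prod_ofFn_comp, mul_assoc]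
  refine (opNorm_comp_le _ _).trans ?_
  gcongr
  exact (opNorm_comp_le _ _).trans (by gcongr; exact norm_prod_ofFn_le _)

end Normed

section Hilbert

variable {𝕜 E F ι : Type*} [RCLike 𝕜] [NormedAddCommGroup E] [InnerProductSpace 𝕜 E]
  [CompleteSpace E] [NormedAddCommGroup F] [InnerProductSpace 𝕜 F] [CompleteSpace F]
  {T : ι → E →L[𝕜] F} {α β : ι → ι → ℝ} {M : ℝ}

theorem norm_prod_ofFn_adjoint_comp_le (hα : ∀ i j, 0 ≤ α i j) (hβ : ∀ i j, 0 ≤ β i j)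
    (ha : ∀ i j, ‖adjoint (T i) ∘L T j‖ ≤ α i j ^ 2)
    (hb : ∀ i j, ‖T i ∘L adjoint (T j)‖ ≤ β i j ^ 2)
    (hM : ∀ i, ‖T i‖ ≤ M) {n : ℕ} (w : Fin (n + 1) → ι × ι) :
    ‖(List.ofFn fun k => adjoint (T (w k).1) ∘L T (w k).2).prod‖ ≤
      (∏ k, α (w k).1 (w k).2) * (M * ∏ k : Fin n, β (w k.castSucc).2 (w k.succ).1) := by
  have hM0 : 0 ≤ M := (norm_nonneg _).trans (hM (w 0).1)
  refine le_mul_of_le_sq_of_le_sq (Finset.prod_nonneg fun k _ => hα _ _)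
    (mul_nonneg hM0 (Finset.prod_nonneg fun k _ => hβ _ _)) ?_ ?_
  · calc _ ≤ ∏ k, ‖adjoint (T (w k).1) ∘L T (w k).2‖ := norm_prod_ofFn_le _
      _ ≤ ∏ k, α (w k).1 (w k).2 ^ 2 := by gcongr with k; exact ha _ _
      _ = _ := Finset.prod_pow _ _ _
  · calc _ ≤ ‖adjoint (T (w 0).1)‖ *
            (∏ k : Fin n, ‖T (w k.castSucc).2 ∘L adjoint (T (w k.succ).1)‖) *
            ‖T (w (Fin.last n)).2‖ :=
          norm_prod_ofFn_comp_le (fun k => adjoint (T (w k).1)) (fun k => T (w k).2)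
      _ ≤ M * (∏ k : Fin n, β (w k.castSucc).2 (w k.succ).1 ^ 2) * M := by
          rw [LinearIsometryEquiv.norm_map]
          gcongr with k
          exacts [hM _, hb _ _, hM _]
      _ = _ := by rw [Finset.prod_pow]; ring

theorem norm_adjoint_comp_sum_pow_le [Fintype ι] {A B : ℝ} (hα : ∀ i j, 0 ≤ α i j)
    (hβ : ∀ i j, 0 ≤ β i j) (ha : ∀ i j, ‖adjoint (T i) ∘L T j‖ ≤ α i j ^ 2)
    (hb : ∀ i j, ‖T i ∘L adjoint (T j)‖ ≤ β i j ^ 2) (hM : ∀ i, ‖T i‖ ≤ M) (hM0 : 0 ≤ M)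
    (hA : ∀ i, ∑ j, α i j ≤ A) (hB : ∀ i, ∑ j, β i j ≤ B) (hA0 : 0 ≤ A) (hB0 : 0 ≤ B)
    (n : ℕ) :
    ‖(adjoint (∑ i, T i) ∘L ∑ i, T i) ^ (n + 1)‖ ≤ M * (Fintype.card ι * A) * (B * A) ^ n := by
  have hP : adjoint (∑ i, T i) ∘L ∑ i, T i = ∑ p : ι × ι, adjoint (T p.1) ∘L T p.2 := by
    simp only [map_sum, finsetSum_comp, comp_finsetSum, Fintype.sum_prod_type]
    exact Finset.sum_comm
  have hrow : ∀ p : ι × ι, ∑ q : ι × ι, β p.2 q.1 * α q.1 q.2 ≤ B * A := fun p => calc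
    _ = ∑ i, β p.2 i * ∑ j, α i j := by simp [Fintype.sum_prod_type, Finset.mul_sum]
    _ ≤ ∑ i, β p.2 i * A := by gcongr with i; exacts [hβ _ _, hA i]
    _ ≤ B * A := by rw [← Finset.sum_mul]; gcongr; exact hB _
  have htotal : ∑ p : ι × ι, α p.1 p.2 ≤ Fintype.card ι * A := calc
    _ ≤ ∑ _i : ι, A := by rw [Fintype.sum_prod_type]; gcongr with i; exact hA i
    _ = _ := by simp
  rw [hP, sum_pow_eq_sum_prod_ofFn]
  calc _ ≤ ∑ w : Fin (n + 1) → ι × ι,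
          ‖(List.ofFn fun k => adjoint (T (w k).1) ∘L T (w k).2).prod‖ := norm_sum_le _ _
    _ ≤ ∑ w : Fin (n + 1) → ι × ι, M * (α (w 0).1 (w 0).2 *
          ∏ k : Fin n, β (w k.castSucc).2 (w k.succ).1 * α (w k.succ).1 (w k.succ).2) := by
        gcongr with w
        refine (norm_prod_ofFn_adjoint_comp_le hα hβ ha hb hM w).trans_eq ?_
        rw [Fin.prod_univ_succ, Finset.prod_mul_distrib]
        ring
    _ ≤ M * ((∑ p : ι × ι, α p.1 p.2) * (B * A) ^ n) := by
        rw [← Finset.mul_sum]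
        gcongr
        exact sum_mul_prod_le_mul_pow (fun p : ι × ι => α p.1 p.2)
          (fun p q : ι × ι => β p.2 q.1 * α q.1 q.2) (fun _ => hα _ _)
          (fun _ _ => mul_nonneg (hβ _ _) (hα _ _)) hrow (by positivity) n
    _ ≤ M * (Fintype.card ι * A) * (B * A) ^ n := by
        rw [mul_assoc M]
        gcongr

end Hilbert

end ContinuousLinearMap

theorem cotlar_stein_finite
    {E F : Type*}
    [NormedAddCommGroup E] [InnerProductSpace ℂ E] [CompleteSpace E]
    [NormedAddCommGroup F] [InnerProductSpace ℂ F] [CompleteSpace F]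
    (N : ℕ) (T : Fin N → E →L[ℂ] F)
    (a b : Fin N → Fin N → ℝ)
    (ha0 : ∀ i j, 0 ≤ a i j) (hb0 : ∀ i j, 0 ≤ b i j)
    (ha : ∀ i j, ‖(ContinuousLinearMap.adjoint (T i)).comp (T j)‖ ≤ a i j)
    (hb : ∀ i j, ‖(T i).comp (ContinuousLinearMap.adjoint (T j))‖ ≤ b i j)
    (A B : ℝ)
    (hA : ∀ i, ∑ j, Real.sqrt (a i j) ≤ A)
    (hB : ∀ i, ∑ j, Real.sqrt (b i j) ≤ B) :
    ‖∑ i, T i‖ ≤ Real.sqrt A * Real.sqrt B := by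
  rcases isEmpty_or_nonempty (Fin N) with _ | ⟨⟨i₀⟩⟩
  · simp only [Finset.univ_eq_empty, Finset.sum_empty, norm_zero]
    positivity
  have hA0 : 0 ≤ A := (Finset.sum_nonneg fun j _ => Real.sqrt_nonneg _).trans (hA i₀)
  have hB0 : 0 ≤ B := (Finset.sum_nonneg fun j _ => Real.sqrt_nonneg _).trans (hB i₀)
  have ha' (i j) : ‖(ContinuousLinearMap.adjoint (T i)).comp (T j)‖ ≤ Real.sqrt (a i j) ^ 2 :=
    (ha i j).trans_eq (Real.sq_sqrt (ha0 i j)).symm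
  have hb' (i j) : ‖(T i).comp (ContinuousLinearMap.adjoint (T j))‖ ≤ Real.sqrt (b i j) ^ 2 :=
    (hb i j).trans_eq (Real.sq_sqrt (hb0 i j)).symm
  have hM (i) : ‖T i‖ ≤ ∑ j, ‖T j‖ :=
    Finset.single_le_sum (fun j _ => norm_nonneg (T j)) (Finset.mem_univ i)
  have hP : ‖(ContinuousLinearMap.adjoint (∑ i, T i)).comp (∑ i, T i)‖ ≤ B * A :=
    (ContinuousLinearMap.isPositive_adjoint_comp_self _).isSelfAdjoint.norm_le_of_norm_pow_succ_le
      (by positivity) (ContinuousLinearMap.norm_adjoint_comp_sum_pow_le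
        (fun _ _ => Real.sqrt_nonneg _) (fun _ _ => Real.sqrt_nonneg _) ha' hb' hM
        (by positivity) hA hB hA0 hB0)
  rw [← Real.sqrt_mul hA0, Real.le_sqrt (norm_nonneg _) (by positivity), sq,
    ← ContinuousLinearMap.norm_adjoint_comp_self, mul_comm A]
  exact hP
end
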